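/- arXiv:1406.7721 — 6 statements merged into one kernel-verified Lean document; each statement's English description precedes it below -/
import Mathlib

section
/- For every integer n ≥ 1 and every α ∈ [0, π], one has sin(α) ≤ S_n(α) ≤ α, where S_n(α) := (n · ∫₀^α sin^{n-1}(s) ds)^{1/n}. -/
open Real

noncomputable def Sn (n : ℕ) (d : ℝ) : ℝ :=
  ((n : ℝ) * ∫ s in (0:ℝ)..d, Real.sin s ^ (n - 1)) ^ ((1 : ℝ) / n)

/-!
Since `S_n(α)^n = n ∫₀^α sin^{n-1}`, both bounds come from comparing this integral with two
integrals of the same shape: `sin^n α = n ∫₀^α sin^{n-1} cos ≤ n ∫₀^α sin^{n-1}` because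
`cos ≤ 1` and `sin ≥ 0` on `[0, π]`, and `n ∫₀^α sin^{n-1} ≤ n ∫₀^α s^{n-1} = α^n` because
`|sin s| ≤ s` for `s ≥ 0`. Taking `n`-th roots gives the claim.
-/

theorem sin_pow_eq_mul_integral_sin_pow_mul_cos {n : ℕ} (hn : n ≠ 0) (a : ℝ) :
    sin a ^ n = n * ∫ s in (0 : ℝ)..a, sin s ^ (n - 1) * cos s := by
  have hderiv : ∀ x ∈ Set.uIcc 0 a,
      HasDerivAt (fun y => sin y ^ n) (n * (sin x ^ (n - 1) * cos x)) x :=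
    fun x _ => ((hasDerivAt_sin x).pow n).congr_deriv (by ring)
  rw [← intervalIntegral.integral_const_mul,
    intervalIntegral.integral_eq_sub_of_hasDerivAt hderiv
    (Continuous.intervalIntegrable (by fun_prop) _ _)]
  simp [hn]

theorem sin_pow_le_mul_integral_sin_pow {n : ℕ} (hn : n ≠ 0) {a : ℝ} (ha : 0 ≤ a)
    (haπ : a ≤ π) : sin a ^ n ≤ n * ∫ s in (0 : ℝ)..a, sin s ^ (n - 1) := by
  rw [sin_pow_eq_mul_integral_sin_pow_mul_cos hn]
  gcongr
  refine intervalIntegral.integral_mono_on ha (Continuous.intervalIntegrable (by fun_prop) _ _)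
    (Continuous.intervalIntegrable (by fun_prop) _ _) fun s hs => ?_
  have hsin : 0 ≤ sin s ^ (n - 1) :=
    pow_nonneg (sin_nonneg_of_nonneg_of_le_pi hs.1 (hs.2.trans haπ)) _
  exact mul_le_of_le_one_right hsin (cos_le_one s)

theorem sin_pow_le_pow {x : ℝ} (hx : 0 ≤ x) (k : ℕ) : sin x ^ k ≤ x ^ k :=
  calc sin x ^ k ≤ |sin x| ^ k := (le_abs_self _).trans_eq (abs_pow _ _)
    _ ≤ x ^ k := pow_le_pow_left₀ (abs_nonneg _) (abs_sin_le_abs.trans_eq (abs_of_nonneg hx)) k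

theorem mul_integral_sin_pow_le_pow (n : ℕ) {a : ℝ} (ha : 0 ≤ a) :
    n * ∫ s in (0 : ℝ)..a, sin s ^ (n - 1) ≤ a ^ n := by
  rcases n.eq_zero_or_pos with rfl | hn
  · simp
  have hint : ∫ s in (0 : ℝ)..a, sin s ^ (n - 1) ≤ ∫ s in (0 : ℝ)..a, s ^ (n - 1) :=
    intervalIntegral.integral_mono_on ha (Continuous.intervalIntegrable (by fun_prop) _ _)
      (Continuous.intervalIntegrable (by fun_prop) _ _) fun s hs => sin_pow_le_pow hs.1 _
  calc n * ∫ s in (0 : ℝ)..a, sin s ^ (n - 1) ≤ n * ∫ s in (0 : ℝ)..a, s ^ (n - 1) :=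
        mul_le_mul_of_nonneg_left hint n.cast_nonneg
    _ = a ^ n := by
        rw [integral_pow, Nat.sub_add_cancel hn, Nat.cast_pred hn]
        simp only [ne_eq, hn.ne', not_false_eq_true, zero_pow, sub_zero, sub_add_cancel]
        field_simp

theorem stmt_0 (n : ℕ) (hn : 1 ≤ n) (α : ℝ) (hα : α ∈ Set.Icc 0 Real.pi) :
    Real.sin α ≤ Sn n α ∧ Sn n α ≤ α := by
  obtain ⟨hα0, hαπ⟩ := hα
  have hn0 : n ≠ 0 := by omega
  have hsin : 0 ≤ sin α := sin_nonneg_of_nonneg_of_le_pi hα0 hαπ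
  have hlower := sin_pow_le_mul_integral_sin_pow hn0 hα0 hαπ
  have hbase : 0 ≤ n * ∫ s in (0 : ℝ)..α, sin s ^ (n - 1) := (pow_nonneg hsin n).trans hlower
  rw [Sn, one_div]
  constructor
  · calc sin α = (sin α ^ n) ^ (n⁻¹ : ℝ) := (pow_rpow_inv_natCast hsin hn0).symm
      _ ≤ _ := rpow_le_rpow (pow_nonneg hsin n) hlower (by positivity)
  · calc _ ≤ (α ^ n) ^ (n⁻¹ : ℝ) :=
          rpow_le_rpow hbase (mul_integral_sin_pow_le_pow n hα0) (by positivity)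
      _ = α := pow_rpow_inv_natCast hα0 hn0
end

section
/- For every integer n ≥ 1, S_n(α) = α + o(α²) as α → 0⁺; more precisely, 0 ≤ (α − S_n(α))/α² ≤ (α − sin α)/α² for α ∈ (0, π], and hence (α − S_n(α))/α² → 0 as α → 0⁺. -/
open Real Filter

/-!
On `[0, α] ⊆ [0, π]` the integrand is squeezed between two powers of linear functions:
`(sin α / α) * s ≤ sin s` by concavity of `sin`, and `sin s ≤ s`. For a linear function
`n ∫₀^α (c s)^(n-1) ds = c^(n-1) α^n` is explicit, which gives `sin α ≤ S_n(α) ≤ α`.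
Hence `0 ≤ α - S_n(α) ≤ α - sin α ≤ α³/6`.
-/

open Set intervalIntegral Topology

theorem ConcaveOn.mul_le_apply_mul {s : Set ℝ} {f : ℝ → ℝ} {a t : ℝ} (hf : ConcaveOn ℝ s f)
    (h0 : 0 ∈ s) (ha : a ∈ s) (hf0 : 0 ≤ f 0) (ht0 : 0 ≤ t) (ht1 : t ≤ 1) :
    t * f a ≤ f (t * a) := by
  have h := hf.2 h0 ha (sub_nonneg.2 ht1) ht0 (by ring)
  simp only [smul_eq_mul, mul_zero, zero_add] at h
  linarith [mul_nonneg (sub_nonneg.2 ht1) hf0]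

theorem Real.sin_div_mul_le_sin {α s : ℝ} (hα : 0 < α) (hαπ : α ≤ π) (hs : s ∈ Icc 0 α) :
    sin α / α * s ≤ sin s := by
  have h := strictConcaveOn_sin_Icc.concaveOn.mul_le_apply_mul ⟨le_rfl, pi_pos.le⟩
    ⟨hα.le, hαπ⟩ sin_zero.ge (div_nonneg hs.1 hα.le) ((div_le_one hα).2 hs.2)
  rwa [div_mul_cancel₀ _ hα.ne', div_mul_comm] at h

theorem integral_mul_pow (c a : ℝ) (m : ℕ) :
    (m + 1) * ∫ s in (0:ℝ)..a, (c * s) ^ m = c ^ m * a ^ (m + 1) := by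
  simp only [mul_pow, integral_const_mul, integral_pow]
  field_simp
  ring

theorem sin_pow_succ_le_integral {α : ℝ} (hα : 0 < α) (hαπ : α ≤ π) (m : ℕ) :
    sin α ^ (m + 1) ≤ (m + 1) * ∫ s in (0:ℝ)..α, sin s ^ m := by
  set c := sin α / α
  have hc0 : 0 ≤ c := div_nonneg (sin_nonneg_of_nonneg_of_le_pi hα.le hαπ) hα.le
  have hc1 : c ≤ 1 := (div_le_one hα).2 (sin_le hα.le)
  calc sin α ^ (m + 1) = c ^ (m + 1) * α ^ (m + 1) := by
        rw [← mul_pow, div_mul_cancel₀ _ hα.ne']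
    _ ≤ c ^ m * α ^ (m + 1) := by
        gcongr ?_ * _
        exact pow_le_pow_of_le_one hc0 hc1 m.le_succ
    _ = (m + 1) * ∫ s in (0:ℝ)..α, (c * s) ^ m := (integral_mul_pow c α m).symm
    _ ≤ (m + 1) * ∫ s in (0:ℝ)..α, sin s ^ m := by
        gcongr
        refine integral_mono_on hα.le (Continuous.intervalIntegrable (by fun_prop) _ _)
          (Continuous.intervalIntegrable (by fun_prop) _ _) fun s hs => ?_
        exact pow_le_pow_left₀ (mul_nonneg hc0 hs.1) (sin_div_mul_le_sin hα hαπ hs) m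

theorem integral_sin_pow_le {α : ℝ} (hα : 0 ≤ α) (hαπ : α ≤ π) (m : ℕ) :
    (m + 1) * ∫ s in (0:ℝ)..α, sin s ^ m ≤ α ^ (m + 1) := by
  calc (m + 1) * ∫ s in (0:ℝ)..α, sin s ^ m ≤ (m + 1) * ∫ s in (0:ℝ)..α, (1 * s) ^ m := by
        gcongr
        refine integral_mono_on hα (Continuous.intervalIntegrable (by fun_prop) _ _)
          (Continuous.intervalIntegrable (by fun_prop) _ _) fun s hs => ?_
        rw [one_mul]
        exact pow_le_pow_left₀ (sin_nonneg_of_nonneg_of_le_pi hs.1 (hs.2.trans hαπ))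
          (sin_le hs.1) m
    _ = α ^ (m + 1) := by rw [integral_mul_pow, one_pow, one_mul]

theorem Sn_succ (m : ℕ) (d : ℝ) :
    Sn (m + 1) d = ((m + 1) * ∫ s in (0:ℝ)..d, sin s ^ m) ^ (((m + 1 : ℕ) : ℝ)⁻¹) := by
  simp [Sn]

theorem sin_le_Sn {n : ℕ} (hn : 1 ≤ n) {α : ℝ} (hα : 0 < α) (hαπ : α ≤ π) :
    sin α ≤ Sn n α := by
  obtain ⟨m, rfl⟩ := Nat.exists_eq_add_of_le' hn
  have hsin := sin_nonneg_of_nonneg_of_le_pi hα.le hαπ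
  have hI := sin_pow_succ_le_integral hα hαπ m
  rw [Sn_succ, le_rpow_inv_iff_of_pos hsin ((pow_nonneg hsin _).trans hI) (by positivity),
    rpow_natCast]
  exact hI

theorem Sn_le_self {n : ℕ} (hn : 1 ≤ n) {α : ℝ} (hα : 0 < α) (hαπ : α ≤ π) :
    Sn n α ≤ α := by
  obtain ⟨m, rfl⟩ := Nat.exists_eq_add_of_le' hn
  have hsin := sin_nonneg_of_nonneg_of_le_pi hα.le hαπ
  have hI := sin_pow_succ_le_integral hα hαπ m
  rw [Sn_succ, rpow_inv_le_iff_of_pos ((pow_nonneg hsin _).trans hI) hα.le (by positivity),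
    rpow_natCast]
  exact integral_sin_pow_le hα.le hαπ m

theorem tendsto_sub_sin_div_sq :
    Tendsto (fun α : ℝ => (α - sin α) / α ^ 2) (𝓝[>] 0) (𝓝 0) := by
  have hlim : Tendsto (fun α : ℝ => α / 6) (𝓝[>] 0) (𝓝 0) :=
    tendsto_nhdsWithin_of_tendsto_nhds <| by
      simpa using ((continuous_id.div_const (6:ℝ)).tendsto 0)
  refine squeeze_zero' ?_ ?_ hlim <;> filter_upwards [self_mem_nhdsWithin] with α (hα : 0 < α)
  · exact div_nonneg (sub_nonneg.2 (sin_le hα.le)) (by positivity)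
  · rw [div_le_iff₀ (by positivity)]
    nlinarith [sin_gt_sub_cube hα]

theorem stmt_1 (n : ℕ) (hn : 1 ≤ n) :
    (∀ α ∈ Set.Ioc (0:ℝ) Real.pi,
      0 ≤ (α - Sn n α) / α ^ 2 ∧ (α - Sn n α) / α ^ 2 ≤ (α - Real.sin α) / α ^ 2) ∧
    Tendsto (fun α : ℝ => (α - Sn n α) / α ^ 2) (nhdsWithin 0 (Set.Ioi 0)) (nhds 0) := by
  have bounds : ∀ α ∈ Ioc (0:ℝ) π,
      0 ≤ (α - Sn n α) / α ^ 2 ∧ (α - Sn n α) / α ^ 2 ≤ (α - sin α) / α ^ 2 :=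
    fun α ⟨hα, hαπ⟩ => ⟨div_nonneg (sub_nonneg.2 (Sn_le_self hn hα hαπ)) (by positivity),
      by gcongr; exact sin_le_Sn hn hα hαπ⟩
  refine ⟨bounds, squeeze_zero' ?_ ?_ tendsto_sub_sin_div_sq⟩ <;>
    filter_upwards [Ioo_mem_nhdsGT pi_pos] with α hα
  exacts [(bounds α (Ioo_subset_Ioc_self hα)).1, (bounds α (Ioo_subset_Ioc_self hα)).2]
end

section
/- For every integer n ≥ 2, c_n(d) > 0 for all d ∈ (0, π). -/
open Real

noncomputable def cn (n : ℕ) (d : ℝ) : ℝ :=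
  (n : ℝ) - Real.sin d ^ (n - 1) / Sn n d ^ (n - 1) - ((n : ℝ) - 1) * Sn n d / Real.tan d

/-!
With `I = ∫₀^d sin^{n-1}` we have `S_n(d)^n = n I` and, substituting `u = sin s`,
`sin^n d = n ∫₀^d sin^{n-1} s cos s ds`. Since `cos d < cos s < 1` for `s ∈ (0, d)`, this integral
lies strictly between `n I cos d` and `n I`, which gives `sin d < S_n(d)` and
`S_n(d) cos d < sin d`. Hence, in `c_n(d)`, the term `(sin d / S_n(d))^{n-1}` is less than `1` and
`S_n(d) / tan d = S_n(d) cos d / sin d` is less than `1`.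
-/

open Set intervalIntegral

theorem integral_mul_lt_integral_mul {a b : ℝ} (hab : a < b) {w f g : ℝ → ℝ}
    (hw : ContinuousOn w (Icc a b)) (hf : ContinuousOn f (Icc a b))
    (hg : ContinuousOn g (Icc a b)) (hw_nonneg : ∀ x ∈ Ioc a b, 0 ≤ w x)
    (hw_pos : ∀ x ∈ Ioo a b, 0 < w x) (hfg : ∀ x ∈ Ioc a b, f x ≤ g x)
    (hfg_lt : ∀ x ∈ Ioo a b, f x < g x) :
    ∫ x in a..b, w x * f x < ∫ x in a..b, w x * g x := by
  refine integral_lt_integral_of_continuousOn_of_le_of_exists_lt hab (hw.mul hf) (hw.mul hg)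
    (fun x hx => mul_le_mul_of_nonneg_left (hfg x hx) (hw_nonneg x hx)) ?_
  have hmid : (a + b) / 2 ∈ Ioo a b := ⟨by linarith, by linarith⟩
  exact ⟨_, Ioo_subset_Icc_self hmid, mul_lt_mul_of_pos_left (hfg_lt _ hmid) (hw_pos _ hmid)⟩

theorem sin_pow_succ_eq_integral (k : ℕ) (d : ℝ) :
    sin d ^ (k + 1) = (k + 1) * ∫ s in (0:ℝ)..d, sin s ^ k * cos s := by
  have h := integral_sin_pow_mul_cos_pow_odd (a := 0) (b := d) k 0
  simp only [mul_zero, zero_add, pow_one, pow_zero, mul_one, integral_pow, sin_zero] at h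
  rw [h]
  field_simp
  simp

section SinPow

variable {k : ℕ} {d : ℝ}

theorem sin_pow_nonneg_of_mem_Icc (hdπ : d ≤ π) {s : ℝ} (hs : s ∈ Icc 0 d) : 0 ≤ sin s ^ k :=
  pow_nonneg (sin_nonneg_of_nonneg_of_le_pi hs.1 (hs.2.trans hdπ)) k

theorem sin_pow_pos_of_mem_Ioo (hdπ : d ≤ π) {s : ℝ} (hs : s ∈ Ioo 0 d) : 0 < sin s ^ k :=
  pow_pos (sin_pos_of_pos_of_lt_pi hs.1 (hs.2.trans_le hdπ)) k

theorem integral_sin_pow_nonneg (hd : 0 ≤ d) (hdπ : d ≤ π) :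
    0 ≤ ∫ s in (0:ℝ)..d, sin s ^ k :=
  integral_nonneg hd fun _ hs => sin_pow_nonneg_of_mem_Icc hdπ hs

theorem integral_sin_pow_mul_cos_lt_integral_sin_pow (hd : 0 < d) (hdπ : d ≤ π) :
    ∫ s in (0:ℝ)..d, sin s ^ k * cos s < ∫ s in (0:ℝ)..d, sin s ^ k := by
  simpa using integral_mul_lt_integral_mul hd (f := cos) (g := fun _ => 1)
    (by fun_prop) (by fun_prop) (by fun_prop)
    (fun s hs => sin_pow_nonneg_of_mem_Icc hdπ (Ioc_subset_Icc_self hs))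
    (fun s hs => sin_pow_pos_of_mem_Ioo hdπ hs) (fun s _ => cos_le_one s)
    (fun s hs => by simpa using cos_lt_cos_of_nonneg_of_le_pi le_rfl (hs.2.le.trans hdπ) hs.1)

theorem integral_sin_pow_mul_cos_right_lt (hd : 0 < d) (hdπ : d ≤ π) :
    (∫ s in (0:ℝ)..d, sin s ^ k) * cos d < ∫ s in (0:ℝ)..d, sin s ^ k * cos s := by
  rw [← integral_mul_const]
  refine integral_mul_lt_integral_mul hd (f := fun _ => cos d) (g := cos)
    (by fun_prop) (by fun_prop) (by fun_prop)
    (fun s hs => sin_pow_nonneg_of_mem_Icc hdπ (Ioc_subset_Icc_self hs))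
    (fun s hs => sin_pow_pos_of_mem_Ioo hdπ hs) (fun s hs => ?_)
    (fun s hs => cos_lt_cos_of_nonneg_of_le_pi hs.1.le hdπ hs.2)
  rcases hs.2.eq_or_lt with rfl | hlt
  · exact le_rfl
  · exact (cos_lt_cos_of_nonneg_of_le_pi hs.1.le hdπ hlt).le

end SinPow

section Sn

variable {n : ℕ} {d : ℝ}

theorem Sn_pow (hn : n ≠ 0) (hd : 0 ≤ d) (hdπ : d ≤ π) :
    Sn n d ^ n = n * ∫ s in (0:ℝ)..d, sin s ^ (n - 1) := by
  rw [Sn, one_div]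
  exact rpow_inv_natCast_pow (mul_nonneg n.cast_nonneg (integral_sin_pow_nonneg hd hdπ)) hn

theorem Sn_nonneg (hd : 0 ≤ d) (hdπ : d ≤ π) : 0 ≤ Sn n d :=
  rpow_nonneg (mul_nonneg n.cast_nonneg (integral_sin_pow_nonneg hd hdπ)) _

theorem sin_pow_lt_Sn_pow (hn : n ≠ 0) (hd : 0 < d) (hdπ : d ≤ π) :
    sin d ^ n < Sn n d ^ n := by
  obtain ⟨k, rfl⟩ := Nat.exists_eq_succ_of_ne_zero hn
  rw [Sn_pow hn hd.le hdπ, sin_pow_succ_eq_integral]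
  push_cast
  exact mul_lt_mul_of_pos_left
    (integral_sin_pow_mul_cos_lt_integral_sin_pow hd hdπ) (by positivity)

theorem Sn_pow_mul_cos_lt_sin_pow (hn : n ≠ 0) (hd : 0 < d) (hdπ : d ≤ π) :
    Sn n d ^ n * cos d < sin d ^ n := by
  obtain ⟨k, rfl⟩ := Nat.exists_eq_succ_of_ne_zero hn
  rw [Sn_pow hn hd.le hdπ, sin_pow_succ_eq_integral, mul_assoc]
  push_cast
  exact mul_lt_mul_of_pos_left
    (integral_sin_pow_mul_cos_right_lt hd hdπ) (by positivity)

theorem sin_lt_Sn (hn : n ≠ 0) (hd : 0 < d) (hdπ : d ≤ π) : sin d < Sn n d :=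
  lt_of_pow_lt_pow_left₀ n (Sn_nonneg hd.le hdπ) (sin_pow_lt_Sn_pow hn hd hdπ)

theorem Sn_mul_cos_lt_sin (hn : n ≠ 0) (hd : 0 < d) (hdπ : d < π) : Sn n d * cos d < sin d := by
  have hsin : 0 < sin d := sin_pos_of_pos_of_lt_pi hd hdπ
  rcases le_or_gt (cos d) 0 with hcos | hcos
  · exact (mul_nonpos_of_nonneg_of_nonpos (Sn_nonneg hd.le hdπ.le) hcos).trans_lt hsin
  refine lt_of_pow_lt_pow_left₀ n hsin.le ?_
  calc (Sn n d * cos d) ^ n = Sn n d ^ n * cos d ^ n := mul_pow _ _ _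
    _ ≤ Sn n d ^ n * cos d :=
      mul_le_mul_of_nonneg_left (pow_le_of_le_one hcos.le (cos_le_one d) hn)
        (pow_nonneg (Sn_nonneg hd.le hdπ.le) n)
    _ < sin d ^ n := Sn_pow_mul_cos_lt_sin_pow hn hd hdπ.le

end Sn

theorem stmt_3 (n : ℕ) (hn : 2 ≤ n) (d : ℝ) (hd : d ∈ Set.Ioo (0:ℝ) Real.pi) :
    0 < cn n d := by
  obtain ⟨hd0, hdπ⟩ := hd
  have hn0 : n ≠ 0 := by omega
  have hsin : 0 < sin d := sin_pos_of_pos_of_lt_pi hd0 hdπ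
  have hS : sin d < Sn n d := sin_lt_Sn hn0 hd0 hdπ.le
  have hpow_lt : sin d ^ (n - 1) / Sn n d ^ (n - 1) < 1 := by
    rw [← div_pow]
    exact pow_lt_one₀ (div_nonneg hsin.le (Sn_nonneg hd0.le hdπ.le))
      ((div_lt_one (hsin.trans hS)).2 hS) (by omega)
  have htan_le : Sn n d / tan d ≤ 1 := by
    rw [tan_eq_sin_div_cos, div_div_eq_mul_div, div_le_one hsin]
    exact (Sn_mul_cos_lt_sin hn0 hd0 hdπ).le
  have hn1 : (0:ℝ) ≤ n - 1 := sub_nonneg.2 (by exact_mod_cast hn0.bot_lt)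
  have := mul_le_mul_of_nonneg_left htan_le hn1
  rw [cn, mul_div_assoc]
  linarith
end

section
/- For every integer n ≥ 2, as α → 0⁺ one has c_n(α) ∼ (n−1)α²/2, i.e. lim_{α→0⁺} c_n(α)/α² = (n−1)/2. -/
open Real Filter

/-!
Write `k = n - 1` and `S_n(α) = α Y(α)`. Squeezing `sin s` between `(1 - α²/6) s` and `s` on
`[0, α]` gives `|Y - 1| ≤ α²/6`, and

  `c_n(α) = (1 - (sin α / α)^k) Y^{-k} + g(Y) + k Y (1 - α / tan α)`,  `g(u) = n - u^{-k} - k u`.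

Since `g` vanishes to second order at `u = 1`, `g(Y) = o(α²)`, so only the Taylor expansions
of `sin α / α` and `α / tan α` contribute, giving `k/6 + k/3 = k/2`.
-/

open Topology Asymptotics

section DerivComp

variable {𝕜 : Type*} [NontriviallyNormedField 𝕜] {g u v : 𝕜 → 𝕜} {a g' L : 𝕜} {l : Filter 𝕜}

theorem HasDerivAt.tendsto_dslope_comp (hg : HasDerivAt g g' a) (hu : Tendsto u l (𝓝 a)) :
    Tendsto (fun x => dslope g a (u x)) l (𝓝 g') := by
  rw [← hg.deriv, ← dslope_same]
  exact (continuousAt_dslope_same.2 hg.differentiableAt).tendsto.comp hu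

theorem HasDerivAt.tendsto_comp_sub_div (hg : HasDerivAt g g' a) (hu : Tendsto u l (𝓝 a))
    (huv : Tendsto (fun x => (u x - a) / v x) l (𝓝 L)) :
    Tendsto (fun x => (g (u x) - g a) / v x) l (𝓝 (g' * L)) :=
  ((hg.tendsto_dslope_comp hu).mul huv).congr fun x => by
    rw [← sub_smul_dslope g a (u x), smul_eq_mul]; ring

theorem HasDerivAt.isLittleO_comp_sub (hg : HasDerivAt g 0 a) (hu : Tendsto u l (𝓝 a))
    (huv : (fun x => u x - a) =O[l] v) : (fun x => g (u x) - g a) =o[l] v := by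
  have := ((isLittleO_one_iff 𝕜).2 (hg.tendsto_dslope_comp hu)).mul_isBigO huv
  simp only [one_mul] at this
  refine this.congr_left fun x => ?_
  rw [← sub_smul_dslope g a (u x), smul_eq_mul, mul_comm]

end DerivComp

theorem tendsto_div_pow_of_isBigO {f : ℝ → ℝ} {c : ℝ} {n : ℕ}
    (h : (fun x => f x - c * x ^ n) =O[𝓝 0] fun x => x ^ (n + 1)) :
    Tendsto (fun x => f x / x ^ n) (𝓝[≠] 0) (𝓝 c) := by
  have hO : (fun x => f x / x ^ n - c) =O[𝓝[≠] 0] fun x => x := by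
    refine ((h.mono nhdsWithin_le_nhds).mul (isBigO_refl (fun x : ℝ => (x ^ n)⁻¹) _)).congr' ?_ ?_
    · filter_upwards [self_mem_nhdsWithin] with x (hx : x ≠ 0)
      field_simp
    · filter_upwards [self_mem_nhdsWithin] with x (hx : x ≠ 0)
      field_simp
      ring
  rw [← tendsto_sub_nhds_zero_iff]
  exact hO.trans_tendsto (tendsto_id.mono_left nhdsWithin_le_nhds)

theorem tendsto_sin_div_self : Tendsto (fun x => sin x / x) (𝓝[≠] 0) (𝓝 1) := by
  rw [← sinc_zero]
  refine (continuous_sinc.tendsto 0).mono_left nhdsWithin_le_nhds |>.congr' ?_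
  filter_upwards [self_mem_nhdsWithin] with x hx using sinc_of_ne_zero hx

theorem eventually_abs_le_one : ∀ᶠ x : ℝ in 𝓝 0, |x| ≤ 1 := by
  filter_upwards [Icc_mem_nhds (show (-1 : ℝ) < 0 by norm_num) one_pos] with x hx
  exact abs_le.2 hx

theorem tendsto_sin_sub_self_div_cube :
    Tendsto (fun x => (sin x - x) / x ^ 3) (𝓝[≠] 0) (𝓝 (-1 / 6)) := by
  refine tendsto_div_pow_of_isBigO (IsBigO.of_bound' ?_)
  filter_upwards [eventually_abs_le_one] with x hx
  have h5 : |x| ^ 5 ≤ |x| ^ 4 := pow_le_pow_of_le_one (abs_nonneg x) hx (by norm_num)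
  calc ‖sin x - x - -1 / 6 * x ^ 3‖ = |sin x - (x - x ^ 3 / 6)| := by rw [norm_eq_abs]; ring_nf
    _ ≤ |x| ^ 5 / 100 := sin_bound hx
    _ ≤ ‖x ^ (3 + 1)‖ := by rw [norm_pow, norm_eq_abs]; linarith [pow_nonneg (abs_nonneg x) 5]

theorem tendsto_sin_sub_mul_cos_div_cube :
    Tendsto (fun x => (sin x - x * cos x) / x ^ 3) (𝓝[≠] 0) (𝓝 (1 / 3)) := by
  refine tendsto_div_pow_of_isBigO (IsBigO.of_bound' ?_)
  filter_upwards [eventually_abs_le_one] with x hx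
  have h5 : |x| ^ 5 ≤ |x| ^ 4 := pow_le_pow_of_le_one (abs_nonneg x) hx (by norm_num)
  calc ‖sin x - x * cos x - 1 / 3 * x ^ 3‖
      = |(sin x - (x - x ^ 3 / 6)) - x * (cos x - (1 - x ^ 2 / 2))| := by rw [norm_eq_abs]; ring_nf
    _ ≤ |sin x - (x - x ^ 3 / 6)| + |x| * |cos x - (1 - x ^ 2 / 2)| := by
      rw [← abs_mul]; exact abs_sub _ _
    _ ≤ |x| ^ 5 / 100 + |x| * (|x| ^ 4 * (5 / 96)) :=
      add_le_add (sin_bound hx) (mul_le_mul_of_nonneg_left (cos_bound hx) (abs_nonneg x))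
    _ ≤ ‖x ^ (3 + 1)‖ := by rw [norm_pow, norm_eq_abs]; nlinarith [pow_nonneg (abs_nonneg x) 5]

theorem one_sub_sq_div_six_mul_le_sin {s α : ℝ} (hs : 0 ≤ s) (hsα : s ≤ α) :
    (1 - α ^ 2 / 6) * s ≤ sin s := by
  nlinarith [sin_ge_sub_cube hs, mul_le_mul hsα hsα hs (hs.trans hsα)]

theorem mul_integral_sin_pow_le (k : ℕ) {α : ℝ} (h0 : 0 ≤ α) (hπ : α ≤ π) :
    (k + 1) * ∫ s in (0 : ℝ)..α, sin s ^ k ≤ α ^ (k + 1) := by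
  have hle : ∫ s in (0 : ℝ)..α, sin s ^ k ≤ ∫ s in (0 : ℝ)..α, s ^ k :=
    intervalIntegral.integral_mono_on h0 (Continuous.intervalIntegrable (by fun_prop) _ _)
      (Continuous.intervalIntegrable (by fun_prop) _ _) fun s hs =>
      pow_le_pow_left₀ (sin_nonneg_of_nonneg_of_le_pi hs.1 (hs.2.trans hπ)) (sin_le hs.1) k
  rw [integral_pow, zero_pow k.succ_ne_zero, sub_zero] at hle
  rw [le_div_iff₀ (by positivity)] at hle
  linarith

theorem le_mul_integral_sin_pow (k : ℕ) {α : ℝ} (h0 : 0 ≤ α) (h6 : α ^ 2 ≤ 6) :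
    (1 - α ^ 2 / 6) ^ k * α ^ (k + 1) ≤ (k + 1) * ∫ s in (0 : ℝ)..α, sin s ^ k := by
  have hle : ∫ s in (0 : ℝ)..α, (1 - α ^ 2 / 6) ^ k * s ^ k ≤ ∫ s in (0 : ℝ)..α, sin s ^ k :=
    intervalIntegral.integral_mono_on h0 (Continuous.intervalIntegrable (by fun_prop) _ _)
      (Continuous.intervalIntegrable (by fun_prop) _ _) fun s hs => by
      rw [← mul_pow]
      exact pow_le_pow_left₀ (mul_nonneg (by linarith) hs.1)
        (one_sub_sq_div_six_mul_le_sin hs.1 hs.2) k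
  rw [intervalIntegral.integral_const_mul, integral_pow, zero_pow k.succ_ne_zero, sub_zero] at hle
  rw [← mul_div_assoc, div_le_iff₀ (by positivity)] at hle
  linarith

theorem pow_rpow_one_div_natCast {y : ℝ} (hy : 0 ≤ y) {n : ℕ} (hn : n ≠ 0) :
    (y ^ n) ^ ((1 : ℝ) / n) = y := by
  rw [one_div]
  exact pow_rpow_inv_natCast hy hn

theorem abs_Sn_div_self_sub_one_le (k : ℕ) {α : ℝ} (h0 : 0 < α) (h1 : α ≤ 1) :
    |Sn (k + 1) α / α - 1| ≤ α ^ 2 / 6 := by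
  have hα6 : α ^ 2 ≤ 6 := by nlinarith
  have hc : 0 ≤ (1 - α ^ 2 / 6) * α := by nlinarith
  set X := (k + 1 : ℝ) * ∫ s in (0 : ℝ)..α, sin s ^ k
  have hSn : Sn (k + 1) α = X ^ ((1 : ℝ) / (k + 1 : ℕ)) := by simp [Sn, X]
  have hlow : ((1 - α ^ 2 / 6) * α) ^ (k + 1) ≤ X := by
    refine le_trans ?_ (le_mul_integral_sin_pow k h0.le hα6)
    rw [mul_pow, pow_succ (1 - α ^ 2 / 6)]
    have hc₀ : 0 ≤ 1 - α ^ 2 / 6 := by linarith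
    exact mul_le_mul_of_nonneg_right
      (mul_le_of_le_one_right (pow_nonneg hc₀ k) (by linarith [sq_nonneg α])) (pow_nonneg h0.le _)
  have hup : X ≤ α ^ (k + 1) :=
    mul_integral_sin_pow_le k h0.le (h1.trans (by linarith [pi_gt_three]))
  have hSlow : (1 - α ^ 2 / 6) * α ≤ Sn (k + 1) α := by
    rw [hSn, ← pow_rpow_one_div_natCast hc k.succ_ne_zero]
    exact rpow_le_rpow (pow_nonneg hc _) hlow (by positivity)
  have hSup : Sn (k + 1) α ≤ α := by
    rw [hSn, ← pow_rpow_one_div_natCast h0.le k.succ_ne_zero]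
    exact rpow_le_rpow ((pow_nonneg hc _).trans hlow) hup (by positivity)
  rw [abs_le]
  constructor
  · rw [le_sub_iff_add_le, le_div_iff₀ h0]; linarith
  · rw [sub_le_iff_le_add, div_le_iff₀ h0]; nlinarith

theorem tendsto_one_sub_sin_div_self_pow_div_sq (k : ℕ) :
    Tendsto (fun x => (1 - (sin x / x) ^ k) / x ^ 2) (𝓝[≠] 0) (𝓝 ((k : ℝ) / 6)) := by
  have huv : Tendsto (fun x => (sin x / x - 1) / x ^ 2) (𝓝[≠] 0) (𝓝 (-1 / 6)) := by
    refine tendsto_sin_sub_self_div_cube.congr' ?_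
    filter_upwards [self_mem_nhdsWithin] with x (hx : x ≠ 0)
    field_simp
  have h := ((hasDerivAt_pow k (1 : ℝ)).tendsto_comp_sub_div tendsto_sin_div_self huv).neg
  convert h using 2 with x
  · simp only [one_pow]; ring
  · simp only [one_pow, mul_one]; ring

theorem tendsto_one_sub_div_tan_div_sq :
    Tendsto (fun x => (1 - x / tan x) / x ^ 2) (𝓝[≠] 0) (𝓝 (1 / 3)) := by
  have h := tendsto_sin_sub_mul_cos_div_cube.mul (tendsto_sin_div_self.inv₀ one_ne_zero)
  rw [inv_one, mul_one] at h
  refine h.congr' ?_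
  filter_upwards [self_mem_nhdsWithin, tendsto_sin_div_self.eventually_ne one_ne_zero] with x
    (hx : x ≠ 0) hsx
  have hs : sin x ≠ 0 := fun h => hsx (by simp [h])
  rw [tan_eq_sin_div_cos, div_div_eq_mul_div]
  field_simp

theorem hasDerivAt_sub_inv_pow_sub_mul (k : ℕ) :
    HasDerivAt (fun u : ℝ => k + 1 - (u ^ k)⁻¹ - k * u) 0 1 :=
  ((((hasDerivAt_pow k 1).fun_inv (by simp)).const_sub ((k : ℝ) + 1)).fun_sub
    ((hasDerivAt_id' 1).const_mul (k : ℝ))).congr_deriv (by simp)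

theorem isBigO_Sn_div_self_sub_one (k : ℕ) :
    (fun α => Sn (k + 1) α / α - 1) =O[𝓝[>] 0] fun α => α ^ 2 := by
  refine IsBigO.of_bound (1 / 6) ?_
  filter_upwards [Ioc_mem_nhdsGT one_pos] with α hα
  rw [norm_eq_abs, norm_eq_abs, abs_of_nonneg (sq_nonneg α)]
  linarith [abs_Sn_div_self_sub_one_le k hα.1 hα.2]

theorem stmt_4 (n : ℕ) (hn : 2 ≤ n) :
    Tendsto (fun α : ℝ => cn n α / α ^ 2) (nhdsWithin 0 (Set.Ioi 0))
      (nhds (((n : ℝ) - 1) / 2)) := by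
  obtain ⟨k, rfl⟩ : ∃ k, n = k + 1 := ⟨n - 1, by omega⟩
  have hGT : 𝓝[>] (0 : ℝ) ≤ 𝓝[≠] 0 := nhdsWithin_mono _ fun x hx => ne_of_gt hx
  set Y := fun α => Sn (k + 1) α / α
  have hYO : (fun α => Y α - 1) =O[𝓝[>] 0] fun α => α ^ 2 := isBigO_Sn_div_self_sub_one k
  have hY : Tendsto Y (𝓝[>] 0) (𝓝 1) := by
    refine tendsto_sub_nhds_zero_iff.1 (hYO.trans_tendsto ?_)
    simpa using ((continuous_pow 2).tendsto (0 : ℝ)).mono_left nhdsWithin_le_nhds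
  have hg := ((hasDerivAt_sub_inv_pow_sub_mul k).isLittleO_comp_sub hY hYO).tendsto_div_nhds_zero
  have hlim := ((((tendsto_one_sub_sin_div_self_pow_div_sq k).mono_left hGT).mul
    ((hY.pow k).inv₀ (by simp))).add hg).add
    ((hY.const_mul (k : ℝ)).mul (tendsto_one_sub_div_tan_div_sq.mono_left hGT))
  convert hlim.congr' ?_ using 2
  · push_cast; ring
  · filter_upwards [self_mem_nhdsWithin] with α (hα : 0 < α)
    have hS : Sn (k + 1) α = α * Y α := by simp only [Y]; field_simp
    simp only [cn, Nat.add_sub_cancel, hS]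
    push_cast
    field_simp
    ring
end

section
/- For fixed t ≥ 0, the sequence n ↦ n(t − t^{1−1/n}) is nondecreasing in n and converges to t·log t as n → ∞ (with the convention 0·log 0 = 0). Consequently, for a probability density f with respect to a probability measure σ, H_{n,σ}(f) increases to ∫ f log f dσ as n → ∞. -/
open MeasureTheory Filter Real Topology

noncomputable def φn (n : ℕ) (t : ℝ) : ℝ := n * (t - t ^ (1 - 1 / (n : ℝ)))

/-! For `t > 0`, `φn n t = t · n (1 - t^{-1/n})` is `t` times the slope of the convex function
`x ↦ t^x` between `-1/n` and `0`. As `n` grows the point `-1/n` increases to `0`, so by convexity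
these slopes increase, to the derivative `log t` of `x ↦ t^x` at `0`. For `t = 0` the sequence
is `-1, 0, 0, …`. The two-sided bound `t - 1 = φn 1 t ≤ φn n t ≤ t log t` then makes `t + 1 + |t log t|`
a dominating function, so monotonicity and convergence pass to the integrals. -/

lemma φn_one (t : ℝ) : φn 1 t = t - 1 := by
  simp [φn]

lemma φn_zero_nonpos (n : ℕ) : φn n 0 ≤ 0 := by
  simp only [φn, zero_sub, mul_neg, neg_nonpos]
  positivity

lemma φn_zero_of_two_le {n : ℕ} (hn : 2 ≤ n) : φn n 0 = 0 := by
  have hn' : (2 : ℝ) ≤ n := by exact_mod_cast hn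
  have hexp : 1 - 1 / (n : ℝ) ≠ 0 := by
    rw [sub_ne_zero, ne_comm, one_div, inv_ne_one]
    linarith
  rw [φn, zero_rpow hexp]
  ring

lemma φn_eq_mul_slope {t : ℝ} (ht : 0 < t) (n : ℕ) :
    φn n t = t * slope (fun x : ℝ => t ^ x) 0 (-(n : ℝ)⁻¹) := by
  rw [slope_def_field, φn, sub_eq_add_neg 1, rpow_add ht, rpow_one, rpow_zero, one_div]
  rcases eq_or_ne (n : ℝ) 0 with hn | hn
  · simp [hn]
  · field_simp
    ring

lemma φn_mono {t : ℝ} (ht : 0 ≤ t) {m k : ℕ} (hm : 1 ≤ m) (hmk : m ≤ k) :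
    φn m t ≤ φn k t := by
  rcases ht.eq_or_lt with rfl | ht
  · rcases (show k = 1 ∨ 2 ≤ k by omega) with rfl | hk
    · rw [show m = 1 by omega]
    · rw [φn_zero_of_two_le hk]
      exact φn_zero_nonpos m
  · have hm' : (0 : ℝ) < m := by exact_mod_cast hm
    have hk' : (0 : ℝ) < k := by exact_mod_cast hm.trans hmk
    rw [φn_eq_mul_slope ht, φn_eq_mul_slope ht]
    refine mul_le_mul_of_nonneg_left ?_ ht.le
    simp only [slope_def_field]
    refine (convexOn_rpow_left ht).secant_mono trivial trivial trivial (by simp [hm'.ne'])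
      (by simp [hk'.ne']) ?_
    exact neg_le_neg (inv_anti₀ hm' (by exact_mod_cast hmk))

lemma tendsto_neg_inv_natCast_nhdsNE_zero :
    Tendsto (fun n : ℕ => -(n : ℝ)⁻¹) atTop (𝓝[≠] 0) := by
  refine tendsto_nhdsWithin_iff.2 ⟨by simpa using (tendsto_inv_atTop_nhds_zero_nat (𝕜 := ℝ)).neg, ?_⟩
  filter_upwards [eventually_ge_atTop 1] with n hn
  simpa using Nat.one_le_iff_ne_zero.1 hn

lemma tendsto_φn {t : ℝ} (ht : 0 ≤ t) :
    Tendsto (fun n : ℕ => φn n t) atTop (𝓝 (t * log t)) := by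
  rcases ht.eq_or_lt with rfl | ht
  · rw [zero_mul]
    refine tendsto_const_nhds.congr' ?_
    filter_upwards [eventually_ge_atTop 2] with n hn
    exact (φn_zero_of_two_le hn).symm
  · have hslope : Tendsto (slope (fun x : ℝ => t ^ x) 0) (𝓝[≠] 0) (𝓝 (log t)) := by
      simpa using hasDerivAt_iff_tendsto_slope.1 (hasStrictDerivAt_const_rpow ht 0).hasDerivAt
    simp_rw [φn_eq_mul_slope ht]
    exact (hslope.comp tendsto_neg_inv_natCast_nhdsNE_zero).const_mul t

lemma φn_le_mul_log {t : ℝ} (ht : 0 ≤ t) {n : ℕ} (hn : 1 ≤ n) : φn n t ≤ t * log t :=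
  ge_of_tendsto (tendsto_φn ht) (eventually_atTop.2 ⟨n, fun _ hk => φn_mono ht hn hk⟩)

lemma abs_φn_le (n : ℕ) {t : ℝ} (ht : 0 ≤ t) : |φn n t| ≤ t + 1 + |t * log t| := by
  rcases Nat.eq_zero_or_pos n with rfl | hn
  · simp [φn]
    positivity
  · have hlower : t - 1 ≤ φn n t := φn_one t ▸ φn_mono ht le_rfl hn
    have hupper := φn_le_mul_log ht hn
    rw [abs_le]
    constructor <;> linarith [abs_nonneg (t * log t), le_abs_self (t * log t)]

lemma measurable_φn (n : ℕ) : Measurable (φn n) := by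
  unfold φn
  fun_prop

section Integral

variable {M : Type*} [MeasurableSpace M] {μ : Measure M} [IsFiniteMeasure μ] {f : M → ℝ}

lemma integrable_φn_comp (hf0 : ∀ x, 0 ≤ f x) (hf : Integrable f μ)
    (hflog : Integrable (fun x => f x * log (f x)) μ) (n : ℕ) :
    Integrable (fun x => φn n (f x)) μ :=
  ((hf.add (integrable_const 1)).add hflog.abs).mono'
    ((measurable_φn n).comp_aemeasurable hf.aemeasurable).aestronglyMeasurable
    (ae_of_all _ fun x => abs_φn_le n (hf0 x))

lemma tendsto_integral_φn_comp (hf0 : ∀ x, 0 ≤ f x) (hf : Integrable f μ)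
    (hflog : Integrable (fun x => f x * log (f x)) μ) :
    Tendsto (fun n : ℕ => ∫ x, φn n (f x) ∂μ) atTop (𝓝 (∫ x, f x * log (f x) ∂μ)) :=
  tendsto_integral_of_dominated_convergence _
    (fun n => (integrable_φn_comp hf0 hf hflog n).aestronglyMeasurable)
    ((hf.add (integrable_const 1)).add hflog.abs)
    (fun n => ae_of_all _ fun x => abs_φn_le n (hf0 x))
    (ae_of_all _ fun x => tendsto_φn (hf0 x))

end Integral

theorem stmt_11 :
    (∀ t : ℝ, 0 ≤ t → ∀ m k : ℕ, 1 ≤ m → m ≤ k → φn m t ≤ φn k t) ∧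
    (∀ t : ℝ, 0 ≤ t → Tendsto (fun n : ℕ => φn n t) atTop (nhds (t * Real.log t))) ∧
    (∀ (M : Type) (_ : MeasurableSpace M) (σ : Measure M), IsProbabilityMeasure σ →
      ∀ f : M → ℝ, (∀ x, 0 ≤ f x) → Integrable f σ → (∫ x, f x ∂σ) = 1 →
      Integrable (fun x => f x * Real.log (f x)) σ →
      (∀ m k : ℕ, 1 ≤ m → m ≤ k →
        (∫ x, φn m (f x) ∂σ) ≤ ∫ x, φn k (f x) ∂σ) ∧
      Tendsto (fun n : ℕ => ∫ x, φn n (f x) ∂σ) atTop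
        (nhds (∫ x, f x * Real.log (f x) ∂σ))) := by
  refine ⟨fun t ht m k hm hmk => φn_mono ht hm hmk, fun t ht => tendsto_φn ht, ?_⟩
  intro M _ σ _ f hf0 hf _ hflog
  refine ⟨fun m k hm hmk => ?_, tendsto_integral_φn_comp hf0 hf hflog⟩
  exact integral_mono (integrable_φn_comp hf0 hf hflog m) (integrable_φn_comp hf0 hf hflog k)
    fun x => φn_mono (hf0 x) hm hmk
end

section
/- For every integer n ≥ 2 and α ∈ (0,π), one has sin^{n-1}(α)/S_n(α)^{n-1} + (n−1)·S_n(α)/tan(α) ≤ n, equivalently c_n(α) ≥ 0. Moreover sin^{n-1}(α)/S_n(α)^{n-1} ≤ 1 for all α ∈ (0,π). -/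
open Real

theorem stmt_17 (n : ℕ) (hn : 2 ≤ n) (α : ℝ) (hα : α ∈ Set.Ioo (0:ℝ) Real.pi) :
    Real.sin α ^ (n - 1) / Sn n α ^ (n - 1)
      + ((n : ℝ) - 1) * Sn n α / Real.tan α ≤ n ∧
    Real.sin α ^ (n - 1) / Sn n α ^ (n - 1) ≤ 1 := by
  obtain ⟨m, rfl⟩ : ∃ m, n = m + 2 := ⟨n - 2, by omega⟩
  obtain ⟨hα0, hαπ⟩ := hα
  set n := m + 2 with hns
  have hk : n - 1 = m + 1 := rfl
  rw [hk]
  have hsin_pos : 0 < Real.sin α := Real.sin_pos_of_pos_of_lt_pi hα0 hαπ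
  have hcontk : Continuous fun s : ℝ => Real.sin s ^ (m + 1) :=
    Real.continuous_sin.pow (m + 1)
  have hcont2 : Continuous fun s : ℝ => (n:ℝ) * Real.sin s ^ (m + 1) * Real.cos s :=
    ((continuous_const.mul hcontk).mul Real.continuous_cos)
  have hcont3 : Continuous fun s : ℝ => (n:ℝ) * Real.sin s ^ (m + 1) :=
    continuous_const.mul hcontk
  have hS0 : Sn n α
      = ((n:ℝ) * ∫ s in (0:ℝ)..α, Real.sin s ^ (m + 1)) ^ ((1:ℝ)/(n:ℝ)) := rfl
  set I := ∫ s in (0:ℝ)..α, Real.sin s ^ (m + 1) with hIdef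
  have hIpos : 0 < I := by
    rw [hIdef]
    apply intervalIntegral.intervalIntegral_pos_of_pos_on
      (hcontk.intervalIntegrable _ _) _ hα0
    intro x hx
    exact pow_pos (Real.sin_pos_of_pos_of_lt_pi hx.1 (hx.2.trans hαπ)) _
  have hn0 : (0:ℝ) < (n:ℝ) := by positivity
  have hApos : 0 < (n:ℝ) * I := by positivity
  have hSpos : 0 < Sn n α := by rw [hS0]; positivity
  have hSn : Sn n α ^ n = (n:ℝ) * I := by
    rw [hS0, ← Real.rpow_natCast (((n:ℝ)*I) ^ ((1:ℝ)/(n:ℝ))) n, ← Real.rpow_mul hApos.le,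
        one_div, inv_mul_cancel₀ (by positivity : (n:ℝ) ≠ 0), Real.rpow_one]
  have hderiv : ∀ x : ℝ, HasDerivAt (fun s => Real.sin s ^ n)
      ((n:ℝ) * Real.sin x ^ (m + 1) * Real.cos x) x := by
    intro x
    exact (Real.hasDerivAt_sin x).pow n
  have hFTC : ∫ s in (0:ℝ)..α, (n:ℝ) * Real.sin s ^ (m + 1) * Real.cos s
      = Real.sin α ^ n := by
    rw [intervalIntegral.integral_eq_sub_of_hasDerivAt (fun x _ => hderiv x)
      (hcont2.intervalIntegrable _ _)]
    simp [hns]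
  have hle1 : Real.sin α ^ n ≤ (n:ℝ) * I := by
    have hIc : (n:ℝ) * I = ∫ s in (0:ℝ)..α, (n:ℝ) * Real.sin s ^ (m + 1) := by
      rw [hIdef, intervalIntegral.integral_const_mul]
    rw [← hFTC, hIc]
    apply intervalIntegral.integral_mono_on hα0.le (hcont2.intervalIntegrable _ _)
      (hcont3.intervalIntegrable _ _)
    intro x hx
    have hsx : 0 ≤ Real.sin x :=
      Real.sin_nonneg_of_nonneg_of_le_pi hx.1 (hx.2.trans hαπ.le)
    exact mul_le_of_le_one_right (by positivity) (Real.cos_le_one x)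
  have hsinS : Real.sin α ≤ Sn n α := by
    refine le_of_pow_le_pow_left₀ (by omega : n ≠ 0) hSpos.le ?_
    rw [hSn]; exact hle1
  have hT1 : Real.sin α ^ (m + 1) / Sn n α ^ (m + 1) ≤ 1 :=
    (div_le_one (pow_pos hSpos _)).mpr (pow_le_pow_left₀ hsin_pos.le hsinS _)
  have hT0 : 0 ≤ Real.sin α ^ (m + 1) / Sn n α ^ (m + 1) := by positivity
  refine ⟨?_, hT1⟩
  have hn2 : (2:ℝ) ≤ (n:ℝ) := by
    have : (2:ℕ) ≤ n := by omega
    exact_mod_cast this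
  rcases lt_trichotomy α (Real.pi/2) with hlt | heq | hgt
  · -- α < π/2
    have hcos_pos : 0 < Real.cos α :=
      Real.cos_pos_of_mem_Ioo ⟨by linarith [Real.pi_pos], hlt⟩
    have hle2 : (n:ℝ) * I * Real.cos α ≤ Real.sin α ^ n := by
      have e : (∫ s in (0:ℝ)..α, (n:ℝ) * Real.sin s ^ (m + 1) * Real.cos α)
          = (n:ℝ) * I * Real.cos α := by
        rw [intervalIntegral.integral_mul_const, intervalIntegral.integral_const_mul, hIdef]
      rw [← hFTC, ← e]
      apply intervalIntegral.integral_mono_on hα0.le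
        ((hcont3.mul continuous_const).intervalIntegrable _ _)
        (hcont2.intervalIntegrable _ _)
      intro x hx
      have hsx : 0 ≤ Real.sin x :=
        Real.sin_nonneg_of_nonneg_of_le_pi hx.1 (hx.2.trans hαπ.le)
      have hcx : Real.cos α ≤ Real.cos x :=
        Real.cos_le_cos_of_nonneg_of_le_pi hx.1 hαπ.le hx.2
      have hnn : (0:ℝ) ≤ (n:ℝ) * Real.sin x ^ (m + 1) := by positivity
      exact mul_le_mul_of_nonneg_left hcx hnn
    have key : Sn n α ^ n * Real.cos α ≤ Real.sin α ^ n := by rw [hSn]; exact hle2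
    have hstep : Sn n α / Real.tan α ≤ Real.sin α ^ (m + 1) / Sn n α ^ (m + 1) := by
      rw [Real.tan_eq_sin_div_cos, div_div_eq_mul_div,
          div_le_div_iff₀ hsin_pos (pow_pos hSpos _)]
      have e1 : Sn n α * Real.cos α * Sn n α ^ (m + 1)
          = Sn n α ^ n * Real.cos α := by rw [hns]; ring
      have e2 : Real.sin α ^ (m + 1) * Real.sin α = Real.sin α ^ n := by
        rw [hns]; ring
      rw [e1, e2]; exact key
    have h2' : ((n:ℝ) - 1) * Sn n α / Real.tan α
        ≤ ((n:ℝ) - 1) * (Real.sin α ^ (m + 1) / Sn n α ^ (m + 1)) := by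
      rw [mul_div_assoc]
      exact mul_le_mul_of_nonneg_left hstep (by linarith)
    nlinarith [hT1, hT0]
  · -- α = π/2
    have ht : Real.tan α = 0 := by rw [heq]; exact Real.tan_pi_div_two
    rw [ht, div_zero]
    linarith [hT1]
  · -- α > π/2
    have hcos_neg : Real.cos α < 0 :=
      Real.cos_neg_of_pi_div_two_lt_of_lt hgt (by linarith [Real.pi_pos])
    have htan_neg : Real.tan α < 0 := by
      rw [Real.tan_eq_sin_div_cos]
      exact div_neg_of_pos_of_neg hsin_pos hcos_neg
    have hterm : ((n:ℝ) - 1) * Sn n α / Real.tan α ≤ 0 := by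
      apply div_nonpos_of_nonneg_of_nonpos _ htan_neg.le
      have : (0:ℝ) ≤ (n:ℝ) - 1 := by linarith
      positivity
    linarith [hT1]
end
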